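/- arXiv:0905.0998 — 4 statements merged into one kernel-verified Lean document; each statement's English description precedes it below -/
import Mathlib

section
/- Fix β ∈ ℝ, γ ∈ ℂ and C₀ > 0. Suppose that for each real μ ≥ 1 the pair Z_μ = (Z¹_μ, Z²_μ) : ℝ → ℂ × ℂ is a differentiable solution of the system dZ¹/dτ = i(Z¹ + β Z²), dZ²/dτ = i(β Z¹ + μ Z²), whose initial data satisfy |Z¹_μ(0) − γ| + |Z²_μ(0)| ≤ C₀/μ. Then for every bounded interval [a,b] ⊂ ℝ, the quantity sup_{a ≤ τ ≤ b} (|Z¹_μ(τ) − γ e^{iτ}| + |Z²_μ(τ)|) tends to 0 as μ → +∞. -/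
/-!
The flow conserves `‖Z¹‖² + ‖Z²‖²`, so the solution stays bounded by its initial size.
Removing the fast phase, `e^{-iμτ} Z²(τ) = Z²(0) + iβ ∫₀^τ e^{-iμt} Z¹(t) dt`, and one
integration by parts (`Z¹` has bounded derivative) makes this oscillatory integral
`O((1 + |τ|)/μ)`. Removing the slow phase, `e^{-iτ} Z¹` then moves by at most
`|β| ∫ ‖Z²‖ = O(|τ|/μ)`.
-/

open Complex intervalIntegral

theorem hasDerivAt_cexp_mul_ofReal (c : ℂ) (t : ℝ) :
    HasDerivAt (fun s : ℝ => cexp (c * s)) (c * cexp (c * t)) t := by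
  simpa [mul_comm] using ((hasDerivAt_id t).ofReal_comp.const_mul c).cexp

theorem cexp_neg_mul_sub_eq_integral {f g : ℝ → ℂ} {ω : ℝ}
    (hf : ∀ t, HasDerivAt f (I * ω * f t + g t) t) (hg : Continuous g) (s : ℝ) :
    cexp (-I * ω * s) * f s - f 0 = ∫ t in 0..s, cexp (-I * ω * t) * g t := by
  have hderiv : ∀ t : ℝ, HasDerivAt (fun u : ℝ => cexp (-I * ω * u) * f u)
      (cexp (-I * ω * t) * g t) t := fun t =>
    ((hasDerivAt_cexp_mul_ofReal _ t).mul (hf t)).congr_deriv (by ring)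
  rw [integral_eq_sub_of_hasDerivAt (fun t _ => hderiv t)
    ((by fun_prop : Continuous _).intervalIntegrable 0 s)]
  simp

theorem norm_sub_cexp_mul_eq_norm_integral {f g : ℝ → ℂ} {ω : ℝ}
    (hf : ∀ t, HasDerivAt f (I * ω * f t + g t) t) (hg : Continuous g) (s : ℝ) :
    ‖f s - cexp (I * ω * s) * f 0‖ = ‖∫ t in 0..s, cexp (-I * ω * t) * g t‖ := by
  rw [← cexp_neg_mul_sub_eq_integral hf hg s]
  calc ‖f s - cexp (I * ω * s) * f 0‖
      = ‖cexp (-I * ω * s) * (f s - cexp (I * ω * s) * f 0)‖ := by simp [norm_exp]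
    _ = ‖cexp (-I * ω * s) * f s - f 0‖ := by
        rw [mul_sub, ← mul_assoc, ← exp_add, neg_mul, neg_mul, neg_add_cancel, exp_zero, one_mul]

theorem abs_mul_norm_integral_cexp_mul_le {h h' : ℝ → ℂ} {ω M M' : ℝ}
    (hh : ∀ t, HasDerivAt h (h' t) t) (hh' : Continuous h')
    (hM : ∀ t, ‖h t‖ ≤ M) (hM' : ∀ t, ‖h' t‖ ≤ M') (s : ℝ) :
    |ω| * ‖∫ t in 0..s, cexp (-I * ω * t) * h t‖ ≤ 2 * M + M' * |s| := by
  have h_cont : Continuous h := continuous_iff_continuousAt.2 fun t => (hh t).continuousAt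
  have hnorm : ∀ t : ℝ, ‖cexp (-I * ω * t)‖ = 1 := fun t => by simp [norm_exp]
  have hderiv : ∀ t : ℝ, HasDerivAt (fun u : ℝ => cexp (-I * ω * u) * h u)
      (-I * ω * (cexp (-I * ω * t) * h t) + cexp (-I * ω * t) * h' t) t := fun t =>
    ((hasDerivAt_cexp_mul_ofReal _ t).mul (hh t)).congr_deriv (by ring)
  have hftc := integral_eq_sub_of_hasDerivAt (fun t _ => hderiv t)
    ((by fun_prop : Continuous _).intervalIntegrable 0 s)
  rw [integral_add ((by fun_prop : Continuous _).intervalIntegrable 0 s)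
    ((by fun_prop : Continuous _).intervalIntegrable 0 s), integral_const_mul] at hftc
  have hboundary : ‖cexp (-I * ω * s) * h s - cexp (-I * ω * (0 : ℝ)) * h 0‖ ≤ 2 * M := by
    calc _ ≤ ‖cexp (-I * ω * s) * h s‖ + ‖cexp (-I * ω * (0 : ℝ)) * h 0‖ := norm_sub_le _ _
      _ ≤ M + M := by
        rw [norm_mul, norm_mul, hnorm, hnorm, one_mul, one_mul]
        exact add_le_add (hM s) (hM 0)
      _ = 2 * M := by ring
  have hremainder : ‖∫ t in 0..s, cexp (-I * ω * t) * h' t‖ ≤ M' * |s| := by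
    simpa using norm_integral_le_of_norm_le_const (a := 0) (b := s) fun t _ =>
      (by rw [norm_mul, hnorm, one_mul]; exact hM' t : ‖cexp (-I * ω * t) * h' t‖ ≤ M')
  calc |ω| * ‖∫ t in 0..s, cexp (-I * ω * t) * h t‖
      = ‖-I * ω * ∫ t in 0..s, cexp (-I * ω * t) * h t‖ := by simp
    _ = ‖(cexp (-I * ω * s) * h s - cexp (-I * ω * (0 : ℝ)) * h 0)
          - ∫ t in 0..s, cexp (-I * ω * t) * h' t‖ := by rw [← hftc, add_sub_cancel_right]
    _ ≤ 2 * M + M' * |s| := (norm_sub_le _ _).trans (add_le_add hboundary hremainder)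

structure IsModelSolution (β μ : ℝ) (Z1 Z2 : ℝ → ℂ) : Prop where
  hasDerivAt_fst : ∀ τ, HasDerivAt Z1 (I * (Z1 τ + β * Z2 τ)) τ
  hasDerivAt_snd : ∀ τ, HasDerivAt Z2 (I * (β * Z1 τ + μ * Z2 τ)) τ

namespace IsModelSolution

variable {β μ : ℝ} {Z1 Z2 : ℝ → ℂ}

theorem continuous_fst (hZ : IsModelSolution β μ Z1 Z2) : Continuous Z1 :=
  continuous_iff_continuousAt.2 fun τ => (hZ.hasDerivAt_fst τ).continuousAt

theorem continuous_snd (hZ : IsModelSolution β μ Z1 Z2) : Continuous Z2 :=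
  continuous_iff_continuousAt.2 fun τ => (hZ.hasDerivAt_snd τ).continuousAt

theorem sq_norm_add_sq_norm (hZ : IsModelSolution β μ Z1 Z2) (τ : ℝ) :
    ‖Z1 τ‖ ^ 2 + ‖Z2 τ‖ ^ 2 = ‖Z1 0‖ ^ 2 + ‖Z2 0‖ ^ 2 := by
  have hderiv : ∀ t, HasDerivAt (fun s => ‖Z1 s‖ ^ 2 + ‖Z2 s‖ ^ 2) 0 t := fun t =>
    ((hZ.hasDerivAt_fst t).norm_sq.add (hZ.hasDerivAt_snd t).norm_sq).congr_deriv (by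
      simp only [Complex.inner, mul_re, mul_im, add_re, add_im, conj_re, conj_im, I_re, I_im,
        ofReal_re, ofReal_im]
      ring)
  exact is_const_of_deriv_eq_zero (fun t => (hderiv t).differentiableAt)
    (fun t => (hderiv t).deriv) τ 0

theorem norm_fst_le (hZ : IsModelSolution β μ Z1 Z2) (τ : ℝ) : ‖Z1 τ‖ ≤ ‖Z1 0‖ + ‖Z2 0‖ := by
  nlinarith [hZ.sq_norm_add_sq_norm τ, norm_nonneg (Z1 τ), norm_nonneg (Z2 τ),
    norm_nonneg (Z1 0), norm_nonneg (Z2 0)]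

theorem norm_snd_le (hZ : IsModelSolution β μ Z1 Z2) (τ : ℝ) : ‖Z2 τ‖ ≤ ‖Z1 0‖ + ‖Z2 0‖ := by
  nlinarith [hZ.sq_norm_add_sq_norm τ, norm_nonneg (Z1 τ), norm_nonneg (Z2 τ),
    norm_nonneg (Z1 0), norm_nonneg (Z2 0)]

theorem norm_snd_le_add_div (hZ : IsModelSolution β μ Z1 Z2) (hμ : 0 < μ) (s : ℝ) :
    ‖Z2 s‖ ≤ ‖Z2 0‖ + |β| * ((2 + (1 + |β|) * |s|) * (‖Z1 0‖ + ‖Z2 0‖)) / μ := by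
  set E := ‖Z1 0‖ + ‖Z2 0‖
  have hZ1_cont := hZ.continuous_fst
  have hZ2_cont := hZ.continuous_snd
  have hduhamel := norm_sub_cexp_mul_eq_norm_integral (ω := μ) (g := fun t => I * β * Z1 t)
    (fun t => (hZ.hasDerivAt_snd t).congr_deriv (by ring)) (by fun_prop) s
  have hderiv_le : ∀ t, ‖I * (Z1 t + β * Z2 t)‖ ≤ (1 + |β|) * E := fun t => by
    calc ‖I * (Z1 t + β * Z2 t)‖ ≤ ‖Z1 t‖ + |β| * ‖Z2 t‖ := by
          simpa [norm_mul] using norm_add_le (Z1 t) (β * Z2 t)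
      _ ≤ E + |β| * E := by gcongr <;> [exact hZ.norm_fst_le t; exact hZ.norm_snd_le t]
      _ = (1 + |β|) * E := by ring
  have hosc := abs_mul_norm_integral_cexp_mul_le (ω := μ) hZ.hasDerivAt_fst (by fun_prop)
    hZ.norm_fst_le hderiv_le s
  rw [abs_of_pos hμ] at hosc
  have hpull : (∫ t in 0..s, cexp (-I * μ * t) * (I * β * Z1 t))
      = I * β * ∫ t in 0..s, cexp (-I * μ * t) * Z1 t := by
    simp_rw [mul_left_comm (cexp _)]
    exact integral_const_mul _ _
  calc ‖Z2 s‖ ≤ ‖cexp (I * μ * s) * Z2 0‖ + ‖Z2 s - cexp (I * μ * s) * Z2 0‖ :=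
        norm_le_insert' _ _
    _ = ‖Z2 0‖ + |β| * ‖∫ t in 0..s, cexp (-I * μ * t) * Z1 t‖ := by
        rw [hduhamel, hpull]
        simp [norm_exp]
    _ ≤ ‖Z2 0‖ + |β| * ((2 + (1 + |β|) * |s|) * E) / μ := by
        rw [mul_div_assoc]
        gcongr
        rw [le_div_iff₀' hμ]
        linarith

theorem norm_fst_sub_le (hZ : IsModelSolution β μ Z1 Z2) {B T τ : ℝ}
    (hB : ∀ t, |t| ≤ T → ‖Z2 t‖ ≤ B) (hτ : |τ| ≤ T) :
    ‖Z1 τ - cexp (I * τ) * Z1 0‖ ≤ |β| * B * T := by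
  have hZ2_cont := hZ.continuous_snd
  have hduhamel := norm_sub_cexp_mul_eq_norm_integral (ω := 1) (g := fun t => I * β * Z2 t)
    (fun t => (hZ.hasDerivAt_fst t).congr_deriv (by push_cast; ring)) (by fun_prop) τ
  simp only [ofReal_one, mul_one] at hduhamel
  have hB_nonneg : 0 ≤ |β| * B := mul_nonneg (abs_nonneg β)
    ((norm_nonneg _).trans (hB 0 (by simpa using (abs_nonneg τ).trans hτ)))
  rw [hduhamel]
  calc _ ≤ |β| * B * |τ - 0| := norm_integral_le_of_norm_le_const fun t ht => by
        have htT : |t| ≤ T := by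
          have := Set.abs_sub_left_of_mem_uIcc (Set.uIoc_subset_uIcc ht)
          rw [sub_zero, sub_zero] at this
          exact this.trans hτ
        simpa [norm_mul, norm_exp, mul_assoc] using
          mul_le_mul_of_nonneg_left (hB t htT) (abs_nonneg β)
    _ ≤ |β| * B * T := by rw [sub_zero]; gcongr

theorem norm_sub_add_norm_le_div (hZ : IsModelSolution β μ Z1 Z2) (hμ : 1 ≤ μ) {γ : ℂ}
    {C₀ T τ : ℝ} (hinit : ‖Z1 0 - γ‖ + ‖Z2 0‖ ≤ C₀ / μ) (hτ : |τ| ≤ T) :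
    ‖Z1 τ - γ * cexp (I * τ)‖ + ‖Z2 τ‖
      ≤ (C₀ + (|β| * T + 1) * (C₀ + |β| * (2 + (1 + |β|) * T) * (‖γ‖ + C₀))) / μ := by
  have hμ0 : 0 < μ := one_pos.trans_le hμ
  have hinit₁ : ‖Z1 0 - γ‖ ≤ C₀ / μ := by linarith [norm_nonneg (Z2 0)]
  have hinit₂ : ‖Z2 0‖ ≤ C₀ / μ := by linarith [norm_nonneg (Z1 0 - γ)]
  have hC₀ : 0 ≤ C₀ := by
    have := (norm_nonneg _).trans hinit₂
    rwa [le_div_iff₀ hμ0, zero_mul] at this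
  have hE : ‖Z1 0‖ + ‖Z2 0‖ ≤ ‖γ‖ + C₀ := by
    linarith [norm_le_insert' (Z1 0) γ, div_le_self hC₀ hμ]
  set K := C₀ + |β| * (2 + (1 + |β|) * T) * (‖γ‖ + C₀)
  have hZ2 : ∀ t, |t| ≤ T → ‖Z2 t‖ ≤ K / μ := fun t ht => by
    calc ‖Z2 t‖ ≤ ‖Z2 0‖ + |β| * ((2 + (1 + |β|) * |t|) * (‖Z1 0‖ + ‖Z2 0‖)) / μ :=
          hZ.norm_snd_le_add_div hμ0 t
      _ ≤ C₀ / μ + |β| * ((2 + (1 + |β|) * T) * (‖γ‖ + C₀)) / μ := by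
          have hT : 0 ≤ T := (abs_nonneg t).trans ht
          gcongr
      _ = K / μ := by ring
  have hsplit : Z1 τ - γ * cexp (I * τ)
      = (Z1 τ - cexp (I * τ) * Z1 0) + cexp (I * τ) * (Z1 0 - γ) := by ring
  calc ‖Z1 τ - γ * cexp (I * τ)‖ + ‖Z2 τ‖
      ≤ (‖Z1 τ - cexp (I * τ) * Z1 0‖ + ‖Z1 0 - γ‖) + ‖Z2 τ‖ := by
        rw [hsplit]
        gcongr
        simpa using norm_add_le (Z1 τ - cexp (I * τ) * Z1 0) (cexp (I * τ) * (Z1 0 - γ))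
    _ ≤ (|β| * (K / μ) * T + C₀ / μ) + K / μ :=
        add_le_add (add_le_add (hZ.norm_fst_sub_le hZ2 hτ) hinit₁) (hZ2 τ hτ)
    _ = (C₀ + (|β| * T + 1) * K) / μ := by ring

end IsModelSolution

theorem model_adiabatic_limit_locally_uniform_general
    (β : ℝ) (γ : ℂ) (C₀ : ℝ)
    (Z1 Z2 : ℝ → ℝ → ℂ)
    (hode1 : ∀ μ : ℝ, 1 ≤ μ → ∀ τ : ℝ,
      HasDerivAt (Z1 μ) (Complex.I * (Z1 μ τ + (β : ℂ) * Z2 μ τ)) τ)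
    (hode2 : ∀ μ : ℝ, 1 ≤ μ → ∀ τ : ℝ,
      HasDerivAt (Z2 μ) (Complex.I * ((β : ℂ) * Z1 μ τ + (μ : ℂ) * Z2 μ τ)) τ)
    (hinit : ∀ μ : ℝ, 1 ≤ μ →
      ‖Z1 μ 0 - γ‖ + ‖Z2 μ 0‖ ≤ C₀ / μ) :
    ∀ a b : ℝ, ∀ ε : ℝ, 0 < ε → ∃ μ₀ : ℝ, 1 ≤ μ₀ ∧ ∀ μ : ℝ, μ₀ ≤ μ →
      ∀ τ ∈ Set.Icc a b,
        ‖Z1 μ τ - γ * Complex.exp (Complex.I * (τ : ℂ))‖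
          + ‖Z2 μ τ‖ ≤ ε := by
  intro a b ε hε
  set T := max |a| |b|
  set K := C₀ + (|β| * T + 1) * (C₀ + |β| * (2 + (1 + |β|) * T) * (‖γ‖ + C₀))
  refine ⟨max 1 (K / ε), le_max_left _ _, fun μ hμ τ hτ => ?_⟩
  have hμ1 : 1 ≤ μ := (le_max_left _ _).trans hμ
  have hZ : IsModelSolution β μ (Z1 μ) (Z2 μ) := ⟨hode1 μ hμ1, hode2 μ hμ1⟩
  calc _ ≤ K / μ :=
        hZ.norm_sub_add_norm_le_div hμ1 (hinit μ hμ1) (abs_le_max_abs_abs hτ.1 hτ.2)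
    _ ≤ ε := by
        rw [div_le_iff₀ (one_pos.trans_le hμ1)]
        exact (div_le_iff₀' hε).1 ((le_max_right _ _).trans hμ)

/-- Adiabatic limit for the model linear Hamiltonian system on ℂ²:
solutions with initial data `O(1/μ)`-close to `(γ, 0)` converge, uniformly on every
bounded interval `[a, b]`, to `(γ e^{iτ}, 0)` as `μ → +∞`. -/
theorem model_adiabatic_limit_locally_uniform
    (β : ℝ) (γ : ℂ) (C₀ : ℝ) (hC₀ : 0 < C₀)
    (Z1 Z2 : ℝ → ℝ → ℂ)
    (hode1 : ∀ μ : ℝ, 1 ≤ μ → ∀ τ : ℝ,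
      HasDerivAt (Z1 μ) (Complex.I * (Z1 μ τ + (β : ℂ) * Z2 μ τ)) τ)
    (hode2 : ∀ μ : ℝ, 1 ≤ μ → ∀ τ : ℝ,
      HasDerivAt (Z2 μ) (Complex.I * ((β : ℂ) * Z1 μ τ + (μ : ℂ) * Z2 μ τ)) τ)
    (hinit : ∀ μ : ℝ, 1 ≤ μ →
      ‖Z1 μ 0 - γ‖ + ‖Z2 μ 0‖ ≤ C₀ / μ) :
    ∀ a b : ℝ, ∀ ε : ℝ, 0 < ε → ∃ μ₀ : ℝ, 1 ≤ μ₀ ∧ ∀ μ : ℝ, μ₀ ≤ μ →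
      ∀ τ ∈ Set.Icc a b,
        ‖Z1 μ τ - γ * Complex.exp (Complex.I * (τ : ℂ))‖
          + ‖Z2 μ τ‖ ≤ ε :=
  model_adiabatic_limit_locally_uniform_general β γ C₀ Z1 Z2 hode1 hode2 hinit
end

section
/- Fix β ∈ ℝ, K > 0 and C₀ > 0. There exists a constant C > 0, depending only on β, K and C₀, such that the following holds for every real μ ≥ 1: if z = (z¹, z²) : ℝ → ℂ × ℂ is a differentiable solution of dz¹/dτ = i(z¹ + β z²), dz²/dτ = i(β z¹ + μ z²), whose initial data satisfy |z¹(0)|² + |z²(0)|² ≤ K² and μ|z²(0)|² ≤ C₀, then μ|z²(τ)|² ≤ C for every τ ∈ ℝ; in particular sup_{τ∈ℝ} |z²(τ)| ≤ (C/μ)^{1/2}, which tends to 0 as μ → +∞. -/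
/-!
The model system is the linear Schrödinger equation `z' = i H z` on `ℂ²` with the real symmetric
matrix `H = !![1, β; β, μ]`. Since `H` is symmetric, both the mass `‖z‖²` and the energy
`⟪z, H z⟫ = |z¹|² + 2β Re(z̄¹ z²) + μ|z²|²` are conserved. Mass conservation bounds the cross term
`|Re(z̄¹ z²)|` by `K²/2` for all times, so energy conservation leaves `μ|z²(τ)|²` bounded by
`μ|z²(0)|² + |z¹(0)|² + 2|β|K² ≤ C₀ + (1 + 2|β|)K²`.
-/

open Complex ComplexConjugate InnerProductSpace Matrix

local notation "ℂ²" => EuclideanSpace ℂ (Fin 2)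

section Schrodinger

variable {E : Type*} [NormedAddCommGroup E] [InnerProductSpace ℂ E] {T : E →L[ℂ] E} {z : ℝ → E}

theorem inner_apply_eq_of_hasDerivAt_I_smul (hT : (T : E →ₗ[ℂ] E).IsSymmetric)
    (hz : ∀ τ, HasDerivAt z (I • T (z τ)) τ) {S : E →L[ℂ] E} (hST : Commute S T) (τ : ℝ) :
    ⟪z τ, S (z τ)⟫_ℂ = ⟪z 0, S (z 0)⟫_ℂ := by
  have hderiv : ∀ τ, HasDerivAt (fun τ => ⟪z τ, S (z τ)⟫_ℂ) 0 τ := fun τ => by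
    have hTS : ⟪T (z τ), S (z τ)⟫_ℂ = ⟪z τ, S (T (z τ))⟫_ℂ := by
      rw [← mul_apply_eq_comp S T, hST.eq]
      exact hT _ _
    have h := (hz τ).inner ℂ ((S.restrictScalars ℝ).hasFDerivAt.comp_hasDerivAt τ (hz τ))
    simpa only [Function.comp_def, ContinuousLinearMap.coe_restrictScalars', map_smul,
      inner_smul_left, inner_smul_right, conj_I, hTS, neg_mul, add_neg_cancel] using h
  exact is_const_of_deriv_eq_zero (fun τ => (hderiv τ).differentiableAt)
    (fun τ => (hderiv τ).deriv) τ 0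

theorem norm_eq_of_hasDerivAt_I_smul (hT : (T : E →ₗ[ℂ] E).IsSymmetric)
    (hz : ∀ τ, HasDerivAt z (I • T (z τ)) τ) (τ : ℝ) : ‖z τ‖ = ‖z 0‖ := by
  have h := inner_apply_eq_of_hasDerivAt_I_smul hT hz (Commute.one_left T) τ
  simp only [one_apply_eq_self, inner_self_eq_norm_sq_to_K] at h
  exact (pow_left_inj₀ (norm_nonneg _) (norm_nonneg _) two_ne_zero).1 (by exact_mod_cast h)

end Schrodinger

noncomputable def modelHamiltonian (β μ : ℝ) : ℂ² →L[ℂ] ℂ² :=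
  toEuclideanCLM (n := Fin 2) (𝕜 := ℂ) !![1, (β : ℂ); (β : ℂ), (μ : ℂ)]

noncomputable def modelEnergy (β μ : ℝ) (a b : ℂ) : ℝ :=
  ‖a‖ ^ 2 + 2 * β * (conj a * b).re + μ * ‖b‖ ^ 2

section Model

variable {β μ : ℝ}

theorem isSymmetric_modelHamiltonian :
    (modelHamiltonian β μ : ℂ² →ₗ[ℂ] ℂ²).IsSymmetric := by
  rw [modelHamiltonian, coe_toEuclideanCLM_eq_toEuclideanLin, isSymmetric_toEuclideanLin_iff]
  ext i j
  fin_cases i <;> fin_cases j <;> simp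

theorem norm_sq_toLp_pair (a b : ℂ) : ‖!₂[a, b]‖ ^ 2 = ‖a‖ ^ 2 + ‖b‖ ^ 2 := by
  simp [EuclideanSpace.norm_sq_eq, Fin.sum_univ_two]

theorem modelHamiltonian_toLp_pair (a b : ℂ) :
    modelHamiltonian β μ !₂[a, b] = !₂[a + β * b, β * a + μ * b] := by
  ext i
  fin_cases i <;> simp [modelHamiltonian, toEuclideanCLM_toLp, mul_comm]

theorem re_inner_modelHamiltonian (a b : ℂ) :
    (⟪!₂[a, b], modelHamiltonian β μ !₂[a, b]⟫_ℂ).re = modelEnergy β μ a b := by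
  simp only [modelHamiltonian_toLp_pair, modelEnergy, PiLp.inner_apply, RCLike.inner_apply,
    Fin.sum_univ_two, Fin.isValue, cons_val_zero, cons_val_one, cons_val_fin_one, add_re, mul_re,
    add_im, mul_im, ofReal_re, ofReal_im, conj_re, conj_im, Complex.sq_norm, normSq_apply]
  ring

theorem hasDerivAt_modelHamiltonian {z1 z2 : ℝ → ℂ}
    (h1 : ∀ τ : ℝ, HasDerivAt z1 (I * (z1 τ + (β : ℂ) * z2 τ)) τ)
    (h2 : ∀ τ : ℝ, HasDerivAt z2 (I * ((β : ℂ) * z1 τ + (μ : ℂ) * z2 τ)) τ) (τ : ℝ) :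
    HasDerivAt (fun τ => !₂[z1 τ, z2 τ]) (I • modelHamiltonian β μ !₂[z1 τ, z2 τ]) τ := by
  have hpi : HasDerivAt (fun τ => ![z1 τ, z2 τ])
      ![I * (z1 τ + β * z2 τ), I * (β * z1 τ + μ * z2 τ)] τ := by
    rw [hasDerivAt_pi]
    intro i
    fin_cases i
    · exact h1 τ
    · exact h2 τ
  refine ((PiLp.continuousLinearEquiv 2 ℝ (fun _ : Fin 2 => ℂ)).symm.hasFDerivAt.comp_hasDerivAt
    τ hpi).congr_deriv ?_
  rw [modelHamiltonian_toLp_pair]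
  ext i
  fin_cases i <;> simp

theorem abs_re_conj_mul_le (a b : ℂ) : |(conj a * b).re| ≤ (‖a‖ ^ 2 + ‖b‖ ^ 2) / 2 :=
  calc |(conj a * b).re| ≤ ‖conj a * b‖ := abs_re_le_norm _
    _ = ‖a‖ * ‖b‖ := by simp
    _ ≤ (‖a‖ ^ 2 + ‖b‖ ^ 2) / 2 := by linarith [two_mul_le_add_sq ‖a‖ ‖b‖]

theorem mul_norm_sq_le_of_modelEnergy_eq {a b a₀ b₀ : ℂ} {K C₀ : ℝ}
    (hE : modelEnergy β μ a b = modelEnergy β μ a₀ b₀) (h : ‖a‖ ^ 2 + ‖b‖ ^ 2 ≤ K ^ 2)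
    (h₀ : ‖a₀‖ ^ 2 + ‖b₀‖ ^ 2 ≤ K ^ 2) (hb₀ : μ * ‖b₀‖ ^ 2 ≤ C₀) :
    μ * ‖b‖ ^ 2 ≤ C₀ + (1 + 2 * |β|) * K ^ 2 := by
  have hcross : ∀ {x y : ℂ}, ‖x‖ ^ 2 + ‖y‖ ^ 2 ≤ K ^ 2 →
      |β * (conj x * y).re| ≤ |β| * (K ^ 2 / 2) := fun hxy => by
    rw [abs_mul]
    gcongr
    exact (abs_re_conj_mul_le _ _).trans (by linarith)
  unfold modelEnergy at hE
  linarith [abs_le.mp (hcross h), abs_le.mp (hcross h₀), sq_nonneg ‖a‖, sq_nonneg ‖b₀‖]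

end Model

theorem model_system_constraining_potential_general
    (β K C₀ : ℝ) (hC₀ : 0 < C₀) :
    ∃ C : ℝ, 0 < C ∧ ∀ μ : ℝ, 1 ≤ μ → ∀ z1 z2 : ℝ → ℂ,
      (∀ τ : ℝ, HasDerivAt z1 (Complex.I * (z1 τ + (β : ℂ) * z2 τ)) τ) →
      (∀ τ : ℝ, HasDerivAt z2 (Complex.I * ((β : ℂ) * z1 τ + (μ : ℂ) * z2 τ)) τ) →
      ‖z1 0‖ ^ 2 + ‖z2 0‖ ^ 2 ≤ K ^ 2 →
      μ * ‖z2 0‖ ^ 2 ≤ C₀ →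
      (∀ τ : ℝ, μ * ‖z2 τ‖ ^ 2 ≤ C) ∧
      (∀ τ : ℝ, ‖z2 τ‖ ≤ Real.sqrt (C / μ)) := by
  refine ⟨C₀ + (1 + 2 * |β|) * K ^ 2, by positivity, fun μ hμ z1 z2 h1 h2 hinit hb₀ => ?_⟩
  have hz := hasDerivAt_modelHamiltonian h1 h2
  have hmass : ∀ τ, ‖z1 τ‖ ^ 2 + ‖z2 τ‖ ^ 2 ≤ K ^ 2 := fun τ => by
    rwa [← norm_sq_toLp_pair, norm_eq_of_hasDerivAt_I_smul isSymmetric_modelHamiltonian hz τ,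
      norm_sq_toLp_pair]
  have henergy : ∀ τ, modelEnergy β μ (z1 τ) (z2 τ) = modelEnergy β μ (z1 0) (z2 0) := fun τ => by
    rw [← re_inner_modelHamiltonian, ← re_inner_modelHamiltonian,
      inner_apply_eq_of_hasDerivAt_I_smul isSymmetric_modelHamiltonian hz (Commute.refl _) τ]
  have hbound := fun τ => mul_norm_sq_le_of_modelEnergy_eq (henergy τ) (hmass τ) (hmass 0) hb₀
  refine ⟨hbound, fun τ => Real.le_sqrt_of_sq_le ?_⟩
  rw [le_div_iff₀ (by linarith)]
  linarith [hbound τ]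

/-- For the model system, if the initial data are bounded by `K` and
satisfy `μ|z²(0)|² ≤ C₀`, then `μ|z²(τ)|² ≤ C` for all `τ`, with `C` depending only on
`β, K, C₀`; in particular `sup_τ |z²(τ)| ≤ (C/μ)^{1/2} → 0` as `μ → +∞`. -/
theorem model_system_constraining_potential
    (β K C₀ : ℝ) (hK : 0 < K) (hC₀ : 0 < C₀) :
    ∃ C : ℝ, 0 < C ∧ ∀ μ : ℝ, 1 ≤ μ → ∀ z1 z2 : ℝ → ℂ,
      (∀ τ : ℝ, HasDerivAt z1 (Complex.I * (z1 τ + (β : ℂ) * z2 τ)) τ) →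
      (∀ τ : ℝ, HasDerivAt z2 (Complex.I * ((β : ℂ) * z1 τ + (μ : ℂ) * z2 τ)) τ) →
      ‖z1 0‖ ^ 2 + ‖z2 0‖ ^ 2 ≤ K ^ 2 →
      μ * ‖z2 0‖ ^ 2 ≤ C₀ →
      (∀ τ : ℝ, μ * ‖z2 τ‖ ^ 2 ≤ C) ∧
      (∀ τ : ℝ, ‖z2 τ‖ ≤ Real.sqrt (C / μ)) :=
  model_system_constraining_potential_general β K C₀ hC₀
end

section
/- Let a₀, a₁, a₂ : ℝ × ℝ² → ℝ be smooth functions of (t, x¹, x²), and let A₁ᵉˣᵗ, A₂ᵉˣᵗ : ℝ² → ℝ be smooth functions of (x¹, x²) only (a time-independent external potential with A₀ᵉˣᵗ = 0). Set A₀ = a₀, A_j = a_j + A_jᵉˣᵗ for j = 1, 2, and Bᵉˣᵗ = ∂₁A₂ᵉˣᵗ − ∂₂A₁ᵉˣᵗ. Then the following identity holds pointwise on ℝ × ℝ²: a₀(∂₁a₂ − ∂₂a₁) − a₁(∂_t a₂ − ∂₂a₀) + a₂(∂_t a₁ − ∂₁a₀) = A₀(∂₁A₂ − ∂₂A₁)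 − A₁(∂_t A₂ − ∂₂A₀) + A₂(∂_t A₁ − ∂₁A₀) − 2A₀Bᵉˣᵗ + ∂_t(A₁ᵉˣᵗ A₂ − A₂ᵉˣᵗ A₁) + ∂₁(A₀ A₂ᵉˣᵗ) − ∂₂(A₀ A₁ᵉˣᵗ). In particular the Chern–Simons densities of a and of A = a + Aᵉˣᵗ differ by −2A₀Bᵉˣᵗ plus a total space-time derivative. -/
/-- Partial derivative in the time variable `t` for a function on `ℝ × ℝ²`
(coordinates `(t, x¹, x²)`). -/
noncomputable def pdt {F : Type*} [NormedAddCommGroup F] [NormedSpace ℝ F]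
    (f : ℝ × ℝ × ℝ → F) (p : ℝ × ℝ × ℝ) : F :=
  deriv (fun s => f (s, p.2.1, p.2.2)) p.1

/-- Partial derivative in `x¹`. -/
noncomputable def pd1 {F : Type*} [NormedAddCommGroup F] [NormedSpace ℝ F]
    (f : ℝ × ℝ × ℝ → F) (p : ℝ × ℝ × ℝ) : F :=
  deriv (fun s => f (p.1, s, p.2.2)) p.2.1

/-- Partial derivative in `x²`. -/
noncomputable def pd2 {F : Type*} [NormedAddCommGroup F] [NormedSpace ℝ F]
    (f : ℝ × ℝ × ℝ → F) (p : ℝ × ℝ × ℝ) : F :=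
  deriv (fun s => f (p.1, p.2.1, s)) p.2.2

/-- The Chern–Simons densities of `a` and of `A = a + Aᵉˣᵗ`
(with `Aᵉˣᵗ` a time-independent external potential, `A₀ᵉˣᵗ = 0`) differ by
`−2A₀Bᵉˣᵗ` plus a total space-time derivative. -/
theorem chern_simons_density_external_shift
    (a0 a1 a2 : ℝ × ℝ × ℝ → ℝ) (A1ext A2ext : ℝ × ℝ → ℝ)
    (ha0 : ContDiff ℝ (⊤ : ℕ∞) a0) (ha1 : ContDiff ℝ (⊤ : ℕ∞) a1) (ha2 : ContDiff ℝ (⊤ : ℕ∞) a2)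
    (hA1 : ContDiff ℝ (⊤ : ℕ∞) A1ext) (hA2 : ContDiff ℝ (⊤ : ℕ∞) A2ext)
    (A0 A1 A2 : ℝ × ℝ × ℝ → ℝ)
    (hA0def : A0 = a0)
    (hA1def : A1 = fun q => a1 q + A1ext (q.2.1, q.2.2))
    (hA2def : A2 = fun q => a2 q + A2ext (q.2.1, q.2.2)) :
    ∀ p : ℝ × ℝ × ℝ,
      a0 p * (pd1 a2 p - pd2 a1 p) - a1 p * (pdt a2 p - pd2 a0 p)
          + a2 p * (pdt a1 p - pd1 a0 p)
        = A0 p * (pd1 A2 p - pd2 A1 p) - A1 p * (pdt A2 p - pd2 A0 p)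
            + A2 p * (pdt A1 p - pd1 A0 p)
          - 2 * A0 p * (deriv (fun s => A2ext (s, p.2.2)) p.2.1
              - deriv (fun s => A1ext (p.2.1, s)) p.2.2)
          + pdt (fun q => A1ext (q.2.1, q.2.2) * A2 q - A2ext (q.2.1, q.2.2) * A1 q) p
          + pd1 (fun q => A0 q * A2ext (q.2.1, q.2.2)) p
          - pd2 (fun q => A0 q * A1ext (q.2.1, q.2.2)) p := by
  subst hA0def hA1def hA2def
  intro ⟨t, x, y⟩
  have Da0 := ha0.differentiable (by simp)
  have Da1 := ha1.differentiable (by simp)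
  have Da2 := ha2.differentiable (by simp)
  have DE1 := hA1.differentiable (by simp)
  have DE2 := hA2.differentiable (by simp)
  -- slice differentiability
  have sT : ∀ (f : ℝ × ℝ × ℝ → ℝ), Differentiable ℝ f →
      DifferentiableAt ℝ (fun s => f (s, x, y)) t := by intro f hf; fun_prop
  have s1 : ∀ (f : ℝ × ℝ × ℝ → ℝ), Differentiable ℝ f →
      DifferentiableAt ℝ (fun s => f (t, s, y)) x := by intro f hf; fun_prop
  have s2 : ∀ (f : ℝ × ℝ × ℝ → ℝ), Differentiable ℝ f →
      DifferentiableAt ℝ (fun s => f (t, x, s)) y := by intro f hf; fun_prop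
  have E1x : DifferentiableAt ℝ (fun s => A1ext (s, y)) x := by fun_prop
  have E1y : DifferentiableAt ℝ (fun s => A1ext (x, s)) y := by fun_prop
  have E2x : DifferentiableAt ℝ (fun s => A2ext (s, y)) x := by fun_prop
  have E2y : DifferentiableAt ℝ (fun s => A2ext (x, s)) y := by fun_prop
  simp only [pdt, pd1, pd2]
  rw [deriv_fun_add (s1 a2 Da2) E2x, deriv_fun_add (s2 a1 Da1) E1y,
    deriv_add_const, deriv_add_const,
    deriv_fun_sub (by fun_prop) (by fun_prop),
    deriv_const_mul _ (by fun_prop : DifferentiableAt ℝ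
      (fun s => a2 (s, x, y) + A2ext (x, y)) t),
    deriv_const_mul _ (by fun_prop : DifferentiableAt ℝ
      (fun s => a1 (s, x, y) + A1ext (x, y)) t),
    deriv_add_const, deriv_add_const,
    deriv_fun_mul (s1 A0 Da0) E2x, deriv_fun_mul (s2 A0 Da0) E1y]
  ring
end

section
/- Let A₀, A₁, A₂ : ℝ × ℝ² → ℝ and Φ : ℝ × ℝ² → ℂ be smooth and suppose they satisfy the three dynamical equations of Manton's system: E₁ + ∂₁B = −⟨iΦ, D₂Φ⟩, E₂ + ∂₂B = ⟨iΦ, D₁Φ⟩, and iD₀Φ = −(D₁² + D₂²)Φ − (λ/2)(1 − |Φ|²)Φ, for some λ > 0. Then the constraint quantity B − (1/2)(1 − |Φ|²) is conserved: ∂_t ( B − (1/2)(1 − |Φ|²) ) = 0 identically on ℝ × ℝ². -/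
/-- The covariant time derivative `D₀Φ = ∂ₜΦ − iA₀Φ`. -/
noncomputable def covD0 (A0 : ℝ × ℝ × ℝ → ℝ) (Φ : ℝ × ℝ × ℝ → ℂ) : ℝ × ℝ × ℝ → ℂ :=
  fun q => pdt Φ q - Complex.I * (A0 q : ℂ) * Φ q

/-- The covariant derivative `D₁Φ = ∂₁Φ − iA₁Φ`. -/
noncomputable def covD1 (A1 : ℝ × ℝ × ℝ → ℝ) (Φ : ℝ × ℝ × ℝ → ℂ) : ℝ × ℝ × ℝ → ℂ :=
  fun q => pd1 Φ q - Complex.I * (A1 q : ℂ) * Φ q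

/-- The covariant derivative `D₂Φ = ∂₂Φ − iA₂Φ`. -/
noncomputable def covD2 (A2 : ℝ × ℝ × ℝ → ℝ) (Φ : ℝ × ℝ × ℝ → ℂ) : ℝ × ℝ × ℝ → ℂ :=
  fun q => pd2 Φ q - Complex.I * (A2 q : ℂ) * Φ q

/-- The real inner product `⟨a, b⟩ = Re(conj a · b)` on `ℂ`. -/
noncomputable def rInner (a b : ℂ) : ℝ := ((starRingEnd ℂ) a * b).re

/-- The magnetic field `B = ∂₁A₂ − ∂₂A₁`. -/
noncomputable def magB (A1 A2 : ℝ × ℝ × ℝ → ℝ) : ℝ × ℝ × ℝ → ℝ :=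
  fun q => pd1 A2 q - pd2 A1 q

/-- The electric field components `E_j = ∂ₜA_j − ∂_jA₀`. -/
noncomputable def elecE1 (A0 A1 : ℝ × ℝ × ℝ → ℝ) : ℝ × ℝ × ℝ → ℝ :=
  fun q => pdt A1 q - pd1 A0 q

noncomputable def elecE2 (A0 A2 : ℝ × ℝ × ℝ → ℝ) : ℝ × ℝ × ℝ → ℝ :=
  fun q => pdt A2 q - pd2 A0 q

/-! ### Auxiliary machinery: directional derivatives -/

section MCaux

abbrev MCE3 := ℝ × ℝ × ℝ

/-- Directional derivative. -/
noncomputable def MCDv {F : Type*} [NormedAddCommGroup F] [NormedSpace ℝ F]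
    (v : MCE3) (f : MCE3 → F) (p : MCE3) : F := fderiv ℝ f p v

variable {F : Type*} [NormedAddCommGroup F] [NormedSpace ℝ F]

lemma MCpdt_eq {f : MCE3 → F} {p : MCE3} (hf : DifferentiableAt ℝ f p) :
    pdt f p = MCDv (1,0,0) f p := by
  have hl : HasDerivAt (fun s : ℝ => ((s, p.2.1, p.2.2) : MCE3)) (1,0,0) p.1 :=
    (hasDerivAt_id p.1).prodMk (hasDerivAt_const _ _)
  have h2 : HasFDerivAt f (fderiv ℝ f p) ((p.1, p.2.1, p.2.2) : MCE3) := by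
    simpa using hf.hasFDerivAt
  exact (h2.comp_hasDerivAt p.1 hl).deriv

lemma MCpd1_eq {f : MCE3 → F} {p : MCE3} (hf : DifferentiableAt ℝ f p) :
    pd1 f p = MCDv (0,1,0) f p := by
  have hl : HasDerivAt (fun s : ℝ => ((p.1, s, p.2.2) : MCE3)) (0,1,0) p.2.1 :=
    (hasDerivAt_const _ _).prodMk ((hasDerivAt_id p.2.1).prodMk (hasDerivAt_const _ _))
  have h2 : HasFDerivAt f (fderiv ℝ f p) ((p.1, p.2.1, p.2.2) : MCE3) := by
    simpa using hf.hasFDerivAt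
  exact (h2.comp_hasDerivAt p.2.1 hl).deriv

lemma MCpd2_eq {f : MCE3 → F} {p : MCE3} (hf : DifferentiableAt ℝ f p) :
    pd2 f p = MCDv (0,0,1) f p := by
  have hl : HasDerivAt (fun s : ℝ => ((p.1, p.2.1, s) : MCE3)) (0,0,1) p.2.2 :=
    (hasDerivAt_const _ _).prodMk ((hasDerivAt_const _ _).prodMk (hasDerivAt_id p.2.2))
  have h2 : HasFDerivAt f (fderiv ℝ f p) ((p.1, p.2.1, p.2.2) : MCE3) := by
    simpa using hf.hasFDerivAt
  exact (h2.comp_hasDerivAt p.2.2 hl).deriv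

@[fun_prop]
lemma MCDv_contDiff {f : MCE3 → F} (v : MCE3) (hf : ContDiff ℝ (⊤ : ℕ∞) f) :
    ContDiff ℝ (⊤ : ℕ∞) (MCDv v f) :=
  (hf.fderiv_right (by simp)).clm_apply contDiff_const

@[fun_prop]
lemma MCDv_diff {f : MCE3 → F} (v : MCE3) (hf : ContDiff ℝ (⊤ : ℕ∞) f) :
    Differentiable ℝ (MCDv v f) :=
  (MCDv_contDiff v hf).differentiable (by simp)

@[fun_prop]
lemma MCDv_diffAt {f : MCE3 → F} (v : MCE3) (hf : ContDiff ℝ (⊤ : ℕ∞) f) (p : MCE3) :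
    DifferentiableAt ℝ (MCDv v f) p :=
  MCDv_diff v hf p

lemma MCDv_swap {f : MCE3 → F} (hf : ContDiff ℝ (⊤ : ℕ∞) f) (v w p : MCE3) :
    MCDv v (MCDv w f) p = MCDv w (MCDv v f) p := by
  have hd : Differentiable ℝ (fderiv ℝ f) := (hf.fderiv_right (m := (⊤ : ℕ∞)) (by simp)).differentiable (by simp)
  have key : ∀ u u' : MCE3, MCDv u (MCDv u' f) p = fderiv ℝ (fderiv ℝ f) p u u' := by
    intro u u'
    unfold MCDv
    rw [fderiv_clm_apply (hd p) (differentiableAt_const _)]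
    simp
  rw [key, key]
  exact (hf.contDiffAt.isSymmSndFDerivAt (by rw [minSmoothness_of_isRCLikeNormedField]; exact WithTop.coe_le_coe.mpr le_top)) v w

variable {v p : MCE3}

lemma MCDv_sub {f g : MCE3 → F} (hf : DifferentiableAt ℝ f p) (hg : DifferentiableAt ℝ g p) :
    MCDv v (fun q => f q - g q) p = MCDv v f p - MCDv v g p := by
  unfold MCDv; rw [fderiv_fun_sub hf hg]; rfl

lemma MCDv_add {f g : MCE3 → F} (hf : DifferentiableAt ℝ f p) (hg : DifferentiableAt ℝ g p) :
    MCDv v (fun q => f q + g q) p = MCDv v f p + MCDv v g p := by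
  unfold MCDv; rw [fderiv_fun_add hf hg]; rfl

lemma MCDv_const (c : F) : MCDv v (fun _ => c) p = 0 := by
  unfold MCDv; rw [fderiv_fun_const]; rfl

lemma MCDv_neg {f : MCE3 → F} : MCDv v (fun q => -f q) p = -MCDv v f p := by
  unfold MCDv; rw [fderiv_fun_neg]; rfl

lemma MCDv_mul {f g : MCE3 → ℂ} (hf : DifferentiableAt ℝ f p) (hg : DifferentiableAt ℝ g p) :
    MCDv v (fun q => f q * g q) p = f p * MCDv v g p + g p * MCDv v f p := by
  unfold MCDv; rw [fderiv_fun_mul hf hg]; simp [smul_eq_mul]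

lemma MCDv_mulR {f g : MCE3 → ℝ} (hf : DifferentiableAt ℝ f p) (hg : DifferentiableAt ℝ g p) :
    MCDv v (fun q => f q * g q) p = f p * MCDv v g p + g p * MCDv v f p := by
  unfold MCDv; rw [fderiv_fun_mul hf hg]; simp [smul_eq_mul]

lemma MCDv_clm {G H : Type*} [NormedAddCommGroup G] [NormedSpace ℝ G]
    [NormedAddCommGroup H] [NormedSpace ℝ H]
    (L : G →L[ℝ] H) {f : MCE3 → G} (hf : DifferentiableAt ℝ f p) :
    MCDv v (fun q => L (f q)) p = L (MCDv v f p) := by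
  unfold MCDv
  have : fderiv ℝ (⇑L ∘ f) p = L.comp (fderiv ℝ f p) :=
    (L.hasFDerivAt.comp p hf.hasFDerivAt).fderiv
  rw [show (fun q => L (f q)) = ⇑L ∘ f from rfl, this]; rfl

lemma MCDv_re {f : MCE3 → ℂ} (hf : DifferentiableAt ℝ f p) :
    MCDv v (fun q => (f q).re) p = (MCDv v f p).re :=
  MCDv_clm Complex.reCLM hf

lemma MCDv_conj {f : MCE3 → ℂ} (hf : DifferentiableAt ℝ f p) :
    MCDv v (fun q => (starRingEnd ℂ) (f q)) p = (starRingEnd ℂ) (MCDv v f p) := by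
  simpa using MCDv_clm (v := v) (p := p) Complex.conjCLE.toContinuousLinearMap hf

lemma MCDv_ofReal {f : MCE3 → ℝ} (hf : DifferentiableAt ℝ f p) :
    MCDv v (fun q => ((f q : ℝ) : ℂ)) p = ((MCDv v f p : ℝ) : ℂ) :=
  MCDv_clm Complex.ofRealCLM hf

end MCaux

section MCmorph
variable {X : Type*} [NormedAddCommGroup X] [NormedSpace ℝ X] {f : X → ℂ} {g : X → ℝ} {p : X}

@[fun_prop] lemma MCdiffAt_re (hf : DifferentiableAt ℝ f p) :
    DifferentiableAt ℝ (fun x => (f x).re) p := Complex.reCLM.differentiableAt.comp p hf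
@[fun_prop] lemma MCdiff_re (hf : Differentiable ℝ f) :
    Differentiable ℝ (fun x => (f x).re) := fun x => MCdiffAt_re (hf x)
@[fun_prop] lemma MCcd_re {n : WithTop ℕ∞} (hf : ContDiff ℝ n f) :
    ContDiff ℝ n (fun x => (f x).re) := Complex.reCLM.contDiff.comp hf
@[fun_prop] lemma MCdiffAt_im (hf : DifferentiableAt ℝ f p) :
    DifferentiableAt ℝ (fun x => (f x).im) p := Complex.imCLM.differentiableAt.comp p hf
@[fun_prop] lemma MCdiff_im (hf : Differentiable ℝ f) :
    Differentiable ℝ (fun x => (f x).im) := fun x => MCdiffAt_im (hf x)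
@[fun_prop] lemma MCcd_im {n : WithTop ℕ∞} (hf : ContDiff ℝ n f) :
    ContDiff ℝ n (fun x => (f x).im) := Complex.imCLM.contDiff.comp hf
@[fun_prop] lemma MCdiffAt_ofReal (hg : DifferentiableAt ℝ g p) :
    DifferentiableAt ℝ (fun x => ((g x : ℝ) : ℂ)) p :=
  Complex.ofRealCLM.differentiableAt.comp p hg
@[fun_prop] lemma MCdiff_ofReal (hg : Differentiable ℝ g) :
    Differentiable ℝ (fun x => ((g x : ℝ) : ℂ)) := fun x => MCdiffAt_ofReal (hg x)
@[fun_prop] lemma MCcd_ofReal {n : WithTop ℕ∞} (hg : ContDiff ℝ n g) :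
    ContDiff ℝ n (fun x => ((g x : ℝ) : ℂ)) := Complex.ofRealCLM.contDiff.comp hg
@[fun_prop] lemma MCdiffAt_conj (hf : DifferentiableAt ℝ f p) :
    DifferentiableAt ℝ (fun x => (starRingEnd ℂ) (f x)) p :=
  Complex.conjCLE.toContinuousLinearMap.differentiableAt.comp p hf
@[fun_prop] lemma MCdiff_conj (hf : Differentiable ℝ f) :
    Differentiable ℝ (fun x => (starRingEnd ℂ) (f x)) := fun x => MCdiffAt_conj (hf x)
@[fun_prop] lemma MCcd_conj {n : WithTop ℕ∞} (hf : ContDiff ℝ n f) :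
    ContDiff ℝ n (fun x => (starRingEnd ℂ) (f x)) :=
  Complex.conjCLE.toContinuousLinearMap.contDiff.comp hf
end MCmorph

lemma MCsqAbs (z : ℂ) : ‖z‖ ^ 2 = ((starRingEnd ℂ) z * z).re := by
  rw [Complex.sq_norm]
  simp [Complex.normSq_apply, Complex.mul_re]

/-- For smooth solutions of the three dynamical equations of
Manton's Chern–Simons–Schrödinger system on `ℝ²`, the Gauss-law constraint quantity
`B − (1/2)(1 − |Φ|²)` is conserved in time. -/
theorem manton_constraint_conserved
    (A0 A1 A2 : ℝ × ℝ × ℝ → ℝ) (Φ : ℝ × ℝ × ℝ → ℂ) (lam : ℝ) (hlam : 0 < lam)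
    (hA0 : ContDiff ℝ (⊤ : ℕ∞) A0) (hA1 : ContDiff ℝ (⊤ : ℕ∞) A1) (hA2 : ContDiff ℝ (⊤ : ℕ∞) A2)
    (hΦ : ContDiff ℝ (⊤ : ℕ∞) Φ)
    (heq1 : ∀ p, elecE1 A0 A1 p + pd1 (magB A1 A2) p
      = -rInner (Complex.I * Φ p) (covD2 A2 Φ p))
    (heq2 : ∀ p, elecE2 A0 A2 p + pd2 (magB A1 A2) p
      = rInner (Complex.I * Φ p) (covD1 A1 Φ p))
    (heq3 : ∀ p, Complex.I * covD0 A0 Φ p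
      = -(covD1 A1 (covD1 A1 Φ) p + covD2 A2 (covD2 A2 Φ) p)
        - ((lam : ℂ) / 2) * (1 - (‖Φ p‖ : ℂ) ^ 2) * Φ p) :
    ∀ p : ℝ × ℝ × ℝ,
      pdt (fun q => magB A1 A2 q - (1 / 2) * (1 - ‖Φ q‖ ^ 2)) p = 0 := by
  intro p
  have hΦd : Differentiable ℝ Φ := hΦ.differentiable (by simp)
  have hA0d : Differentiable ℝ A0 := hA0.differentiable (by simp)
  have hA1d : Differentiable ℝ A1 := hA1.differentiable (by simp)
  have hA2d : Differentiable ℝ A2 := hA2.differentiable (by simp)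
  -- rewrite the basic objects in directional-derivative form
  have hB : magB A1 A2 = fun q => MCDv (0,1,0) A2 q - MCDv (0,0,1) A1 q := by
    funext q; unfold magB; rw [MCpd1_eq (hA2d q), MCpd2_eq (hA1d q)]
  have hc1 : covD1 A1 Φ = fun q => MCDv (0,1,0) Φ q - Complex.I * (A1 q : ℂ) * Φ q := by
    funext q; unfold covD1; rw [MCpd1_eq (hΦd q)]
  have hc2 : covD2 A2 Φ = fun q => MCDv (0,0,1) Φ q - Complex.I * (A2 q : ℂ) * Φ q := by
    funext q; unfold covD2; rw [MCpd2_eq (hΦd q)]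
  have hBd : Differentiable ℝ (fun q => MCDv (0,1,0) A2 q - MCDv (0,0,1) A1 q) := by fun_prop
  -- the two curl equations, solved for the time derivatives of A1, A2
  have hA1t : MCDv (1,0,0) A1 = fun q =>
      -((starRingEnd ℂ) (Complex.I * Φ q) *
        (MCDv (0,0,1) Φ q - Complex.I * (A2 q : ℂ) * Φ q)).re
      - MCDv (0,1,0) (fun q' => MCDv (0,1,0) A2 q' - MCDv (0,0,1) A1 q') q
      + MCDv (0,1,0) A0 q := by
    funext q
    have h := heq1 q
    unfold elecE1 rInner at h
    simp only [hB, hc2] at h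
    rw [MCpdt_eq (hA1d q), MCpd1_eq (hA0d q), MCpd1_eq (hBd q)] at h
    linarith
  have hA2t : MCDv (1,0,0) A2 = fun q =>
      ((starRingEnd ℂ) (Complex.I * Φ q) *
        (MCDv (0,1,0) Φ q - Complex.I * (A1 q : ℂ) * Φ q)).re
      - MCDv (0,0,1) (fun q' => MCDv (0,1,0) A2 q' - MCDv (0,0,1) A1 q') q
      + MCDv (0,0,1) A0 q := by
    funext q
    have h := heq2 q
    unfold elecE2 rInner at h
    simp only [hB, hc1] at h
    rw [MCpdt_eq (hA2d q), MCpd2_eq (hA0d q), MCpd2_eq (hBd q)] at h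
    linarith
  -- the Schrödinger equation at the point p, in directional-derivative form
  have h3 := heq3 p
  simp only [hc1, hc2] at h3
  unfold covD0 covD1 covD2 at h3
  have hL1d : DifferentiableAt ℝ
      (fun q => MCDv (0,1,0) Φ q - Complex.I * (A1 q : ℂ) * Φ q) p := by fun_prop
  have hL2d : DifferentiableAt ℝ
      (fun q => MCDv (0,0,1) Φ q - Complex.I * (A2 q : ℂ) * Φ q) p := by fun_prop
  rw [MCpdt_eq (hΦd p), MCpd1_eq hL1d, MCpd2_eq hL2d] at h3
  rw [show ((lam : ℂ) / 2) * (1 - (‖Φ p‖ : ℂ) ^ 2) * Φ p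
      = ((lam/2 : ℝ) : ℂ) * (1 - ((Complex.normSq (Φ p) : ℝ) : ℂ)) * Φ p by
    rw [← Complex.ofReal_pow, Complex.sq_norm]; push_cast; ring] at h3
  simp (disch := fun_prop) only [MCDv_sub, MCDv_add, MCDv_mul, MCDv_mulR, MCDv_re,
    MCDv_conj, MCDv_ofReal, MCDv_const, MCDv_neg] at h3
  have h3re := congrArg Complex.re h3
  have h3im := congrArg Complex.im h3
  -- rewrite the goal
  have hfun : (fun q => magB A1 A2 q - (1 / 2) * (1 - ‖Φ q‖ ^ 2))
      = fun q => (MCDv (0,1,0) A2 q - MCDv (0,0,1) A1 q)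
        - (1 / 2) * (1 - ((starRingEnd ℂ) (Φ q) * Φ q).re) := by
    funext q; simp only [hB, MCsqAbs]
  rw [hfun]
  have hFd : DifferentiableAt ℝ (fun q => (MCDv (0,1,0) A2 q - MCDv (0,0,1) A1 q)
      - (1 / 2) * (1 - ((starRingEnd ℂ) (Φ q) * Φ q).re)) p := by fun_prop
  rw [MCpdt_eq hFd]
  simp (disch := fun_prop) only [MCDv_sub, MCDv_add, MCDv_mul, MCDv_mulR, MCDv_re,
    MCDv_conj, MCDv_ofReal, MCDv_const, MCDv_neg]
  rw [MCDv_swap hA2 (1,0,0) (0,1,0) p, MCDv_swap hA1 (1,0,0) (0,0,1) p]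
  rw [hA1t, hA2t]
  simp (disch := fun_prop) only [MCDv_sub, MCDv_add, MCDv_mul, MCDv_mulR, MCDv_re,
    MCDv_conj, MCDv_ofReal, MCDv_const, MCDv_neg]
  rw [MCDv_swap (MCDv_contDiff (0,1,0) hA2) (0,1,0) (0,0,1) p,
    MCDv_swap (MCDv_contDiff (0,0,1) hA1) (0,1,0) (0,0,1) p,
    MCDv_swap hA0 (0,1,0) (0,0,1) p]
  simp only [Complex.add_re, Complex.add_im, Complex.sub_re, Complex.sub_im,
    Complex.mul_re, Complex.mul_im, Complex.neg_re, Complex.neg_im,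
    Complex.one_re, Complex.one_im, Complex.I_re, Complex.I_im,
    Complex.conj_re, Complex.conj_im, Complex.ofReal_re, Complex.ofReal_im,
    Complex.zero_re, Complex.zero_im, map_add, map_mul, map_sub,
    Complex.conj_I, Complex.conj_ofReal] at h3re h3im ⊢
  linear_combination (Φ p).re * h3im - (Φ p).im * h3re
end
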